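/- For r,s ≥ 3 of distinct parity, any single vertex of C_r □ C_s is a 2-antiresolving set, hence adim_2(C_r □ C_s) = 1 and C_r □ C_s is 2-metric antidimensional. -/

import Mathlib

open SimpleGraph

/-- Two vertices have the same distances to every vertex of `S`. -/
def sameDists {V : Type*} (G : SimpleGraph V) (S : Set V) (x y : V) : Prop :=
  ∀ z ∈ S, G.dist x z = G.dist y z

/-- The equivalence class (outside `S`) of `x` under the equal-distance relation `R_S`. -/
def cls {V : Type*} (G : SimpleGraph V) (S : Set V) (x : V) : Set V :=
  {y | y ∉ S ∧ sameDists G S x y}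

/-- `S` is a `k`-antiresolving set: `S` is nonempty, does not cover `V`, and the minimum
size of an equivalence class of `R_S` on `V ∖ S` equals `k`. -/
def IsKARS {V : Type*} (G : SimpleGraph V) (k : ℕ) (S : Set V) : Prop :=
  S.Nonempty ∧ Sᶜ.Nonempty ∧
    (∀ x ∉ S, k ≤ (cls G S x).ncard) ∧ ∃ x ∉ S, (cls G S x).ncard = k

/-- The `k`-metric antidimension: the smallest cardinality of a `k`-antiresolving set,
`⊤` (i.e. `+∞`) if none exists. -/
noncomputable def adim {V : Type*} (G : SimpleGraph V) (k : ℕ) : ℕ∞ :=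
  sInf ((fun S => (S.ncard : ℕ∞)) '' {S : Set V | IsKARS G k S})

/-!
Identify `C_r □ C_s` with the group `ℤ/r × ℤ/s` carrying the norm `|a| + |b|`, where `|·|` is
the distance to `0` along a cycle, and say `r = 2m`, `s = 2q + 1`. From a vertex `x`, every nonzero
distance `N` is realised by the two distinct vertices `x + (N - j, ±j)` with `j = min N q`, while
the largest distance `m + q` is realised only by `x + (m, ±q)`: so `{x}` is a 2-ARS.

Conversely let `S` be nonempty and proper. If some `u ∈ S` has its antipode `u + (m, q)` outside
`S`, the class of that antipode lies in the two-point sphere of radius `m + q` around `u`.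
Otherwise `S` is closed under adding `(m, q)`, hence under adding `2 (m, q) = (0, -1)`, so it
contains a whole fibre `{c} × C_s`; the distances to that fibre determine a vertex up to the
reflection in `c`, so again some class has at most two elements.
-/

open scoped Fin.NatCast

namespace SimpleGraph

variable {V W : Type*} {G : SimpleGraph V} {H : SimpleGraph W}

lemma edist_map_le (f : G →g H) (u v : V) : H.edist (f u) (f v) ≤ G.edist u v :=
  le_iInf fun p => (edist_le (p.map f)).trans_eq (by rw [Walk.length_map])

lemma Iso.dist_apply (e : G ≃g H) (u v : V) : H.dist (e u) (e v) = G.dist u v := by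
  refine congrArg ENat.toNat (le_antisymm (edist_map_le e.toHom u v) ?_)
  simpa using edist_map_le e.symm.toHom (e u) (e v)

lemma Connected.dist_boxProd {α β : Type*} {G : SimpleGraph α} {H : SimpleGraph β}
    (hG : G.Connected) (hH : H.Connected) (x y : α × β) :
    (G □ H).dist x y = G.dist x.1 y.1 + H.dist x.2 y.2 := by
  rw [dist, edist_boxProd, ENat.toNat_add (edist_ne_top_iff_reachable.mpr (hG _ _))
    (edist_ne_top_iff_reachable.mpr (hH _ _))]
  rfl

end SimpleGraph

section Antiresolving

variable {V W : Type*} {G : SimpleGraph V} {H : SimpleGraph W} {k : ℕ}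

lemma cls_image_iso (e : G ≃g H) (S : Set V) (x : V) :
    cls H (e '' S) (e x) = e '' cls G S x := by
  ext w
  obtain ⟨w, rfl⟩ := e.surjective w
  simp only [cls, sameDists, Set.mem_ofPred_eq, Set.forall_mem_image, Iso.dist_apply,
    e.injective.mem_set_image]

lemma IsKARS.image_iso (e : G ≃g H) {S : Set V} (h : IsKARS G k S) : IsKARS H k (e '' S) := by
  obtain ⟨hne, hcne, hle, x, hx, hxk⟩ := h
  have hncard (x : V) : (cls H (e '' S) (e x)).ncard = (cls G S x).ncard := by
    rw [cls_image_iso, Set.ncard_image_of_injective _ e.injective]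
  refine ⟨hne.image e, ?_, ?_, e x, e.injective.mem_set_image.not.mpr hx, hncard x ▸ hxk⟩
  · rw [← Set.image_compl_eq e.bijective]
    exact hcne.image e
  · intro y hy
    obtain ⟨y, rfl⟩ := e.surjective y
    exact hncard y ▸ hle y (e.injective.mem_set_image.not.mp hy)

lemma adim_eq_one_of_forall_isKARS_singleton [Finite V] [Nonempty V]
    (h : ∀ x : V, IsKARS G k {x}) : adim G k = 1 := by
  refine le_antisymm ?_ (le_sInf ?_)
  · inhabit V
    exact sInf_le ⟨{default}, h default, by simp⟩
  · rintro _ ⟨S, hS, rfl⟩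
    exact Nat.one_le_cast.mpr ((Set.ncard_pos S.toFinite).mpr hS.1)

end Antiresolving

namespace Fin

variable {n : ℕ}

def cycleNorm (a : Fin n) : ℕ := min a.val (-a).val

lemma cycleNorm_neg (a : Fin n) : cycleNorm (-a) = cycleNorm a := by
  rw [cycleNorm, cycleNorm, neg_neg, min_comm]

variable [NeZero n]

lemma cycleNorm_eq_min (a : Fin n) : cycleNorm a = min a.val (n - a.val) := by
  rw [cycleNorm, val_neg]
  split_ifs with h <;> simp [h]

lemma cycleNorm_le_half (a : Fin n) : cycleNorm a ≤ n / 2 := by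
  rw [cycleNorm_eq_min]; omega

@[simp]
lemma cycleNorm_eq_zero {a : Fin n} : cycleNorm a = 0 ↔ a = 0 := by
  have := a.isLt
  rw [cycleNorm_eq_min, Fin.ext_iff, val_zero]; omega

@[simp]
lemma cycleNorm_zero : cycleNorm (0 : Fin n) = 0 := cycleNorm_eq_zero.mpr rfl

lemma cycleNorm_add_le (a b : Fin n) : cycleNorm (a + b) ≤ cycleNorm a + cycleNorm b := by
  have := a.isLt; have := b.isLt
  rw [cycleNorm_eq_min, cycleNorm_eq_min, cycleNorm_eq_min, val_add_eq_ite]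
  split_ifs <;> omega

lemma cycleNorm_natCast {k : ℕ} (hk : 2 * k ≤ n) : cycleNorm (k : Fin n) = k := by
  have : k < n := by have := NeZero.pos n; omega
  rw [cycleNorm_eq_min, val_natCast, Nat.mod_eq_of_lt this]; omega

lemma eq_or_eq_neg_of_cycleNorm_eq {a b : Fin n} (h : cycleNorm a = cycleNorm b) :
    a = b ∨ a = -b := by
  have := a.isLt; have := b.isLt
  rw [cycleNorm_eq_min, cycleNorm_eq_min] at h
  rw [Fin.ext_iff, Fin.ext_iff, val_neg]
  split_ifs with hb
  · rw [hb, val_zero] at h ⊢; omega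
  · omega

lemma eq_zero_of_neg_eq_self (hn : Odd n) {a : Fin n} (h : -a = a) : a = 0 := by
  obtain ⟨t, rfl⟩ := hn
  have := congrArg Fin.val h
  rw [val_neg] at this
  split_ifs at this with ha
  · exact ha
  · omega

end Fin

lemma cycleGraph_connected_of_neZero {n : ℕ} [NeZero n] : (cycleGraph n).Connected := by
  obtain ⟨k, rfl⟩ := Nat.exists_eq_succ_of_ne_zero (NeZero.ne n)
  exact cycleGraph_connected

lemma cycleGraph_dist_add_one_le {n : ℕ} [NeZero n] (a : Fin n) :
    (cycleGraph n).dist (a + 1) a ≤ 1 := by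
  by_cases hn : n = 1
  · subst hn; simp
  · refine (dist_eq_one_iff_adj.mpr ?_).le
    rw [cycleGraph_adj', add_sub_cancel_left, Fin.val_one', Nat.one_mod_eq_one]
    exact Or.inl hn

lemma cycleGraph_dist_add_natCast_le {n : ℕ} [NeZero n] (a : Fin n) (k : ℕ) :
    (cycleGraph n).dist (a + k) a ≤ k := by
  induction k with
  | zero => simp
  | succ k ih =>
    rw [Nat.cast_succ, ← add_assoc]
    linarith [cycleGraph_dist_add_one_le (a + (k : Fin n)),
      cycleGraph_connected_of_neZero.dist_triangle (u := a + (k : Fin n) + 1) (v := a + k) (w := a)]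

lemma cycleNorm_sub_le_length {n : ℕ} [NeZero n] {a b : Fin n} (p : (cycleGraph n).Walk a b) :
    (a - b).cycleNorm ≤ p.length := by
  induction p with
  | nil => simp
  | @cons u v w h p ih =>
    have hadj : (u - v).cycleNorm ≤ 1 := by
      rw [cycleGraph_adj', ← neg_sub u v] at h
      rcases h with h | h
      · exact (min_le_left _ _).trans h.le
      · exact (min_le_right _ _).trans h.le
    calc (u - w).cycleNorm ≤ (u - v).cycleNorm + (v - w).cycleNorm := by
          rw [← sub_add_sub_cancel u v w]; exact Fin.cycleNorm_add_le _ _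
      _ ≤ (Walk.cons h p).length := by rw [Walk.length_cons]; omega

lemma cycleGraph_dist {n : ℕ} [NeZero n] (a b : Fin n) :
    (cycleGraph n).dist a b = (a - b).cycleNorm := by
  refine le_antisymm (le_min ?_ ?_) ?_
  · simpa using cycleGraph_dist_add_natCast_le b (a - b).val
  · rw [dist_comm, neg_sub]
    simpa using cycleGraph_dist_add_natCast_le a (b - a).val
  · obtain ⟨p, hp⟩ := cycleGraph_connected_of_neZero.exists_walk_length_eq_dist a b
    exact hp ▸ cycleNorm_sub_le_length p

lemma Set.ncard_le_two_of_subset_pair {α : Type*} {s : Set α} {a b : α} (h : s ⊆ {a, b}) :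
    s.ncard ≤ 2 :=
  (Set.ncard_le_ncard h).trans ((Set.ncard_insert_le a {b}).trans (by simp))

abbrev torus (r s : ℕ) : SimpleGraph (Fin r × Fin s) := cycleGraph r □ cycleGraph s

section Torus

open Fin

variable {r s : ℕ} [NeZero r] [NeZero s]

def torusNorm (z : Fin r × Fin s) : ℕ := z.1.cycleNorm + z.2.cycleNorm

lemma torus_dist (x y : Fin r × Fin s) : (torus r s).dist x y = torusNorm (x - y) := by
  rw [Connected.dist_boxProd cycleGraph_connected_of_neZero cycleGraph_connected_of_neZero,
    cycleGraph_dist, cycleGraph_dist]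
  rfl

lemma torusNorm_eq_zero {z : Fin r × Fin s} : torusNorm z = 0 ↔ z = 0 := by
  simp [torusNorm, Prod.ext_iff]

lemma cls_torus_singleton (x y : Fin r × Fin s) :
    cls (torus r s) {x} y = {w | w ≠ x ∧ torusNorm (w - x) = torusNorm (y - x)} := by
  ext w
  simp [cls, sameDists, torus_dist, eq_comm]

lemma exists_ne_torusNorm_eq {q : ℕ} (hs : s = 2 * q + 1) (hq : q ≠ 0) {z : Fin r × Fin s}
    (hz : z ≠ 0) :
    ∃ z₁ z₂ : Fin r × Fin s, z₁ ≠ z₂ ∧ torusNorm z₁ = torusNorm z ∧ torusNorm z₂ = torusNorm z := by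
  have hN : torusNorm z ≠ 0 := torusNorm_eq_zero.not.mpr hz
  have hNle : torusNorm z ≤ r / 2 + q := by
    have := cycleNorm_le_half z.1; have := cycleNorm_le_half z.2
    unfold torusNorm; omega
  set j := min (torusNorm z) q
  have hi : cycleNorm ((torusNorm z - j : ℕ) : Fin r) = torusNorm z - j :=
    cycleNorm_natCast (by omega)
  have hj : cycleNorm (j : Fin s) = j := cycleNorm_natCast (by omega)
  refine ⟨((torusNorm z - j : ℕ), j), ((torusNorm z - j : ℕ), -j), fun h => ?_, ?_, ?_⟩
  · have hj0 := eq_zero_of_neg_eq_self ⟨q, hs⟩ (congrArg Prod.snd h).symm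
    rw [← cycleNorm_eq_zero, hj] at hj0
    omega
  · change cycleNorm _ + cycleNorm _ = _
    rw [hi, hj]; omega
  · change cycleNorm _ + cycleNorm _ = _
    rw [hi, cycleNorm_neg, hj]; omega

lemma two_le_ncard_cls_torus_singleton {q : ℕ} (hs : s = 2 * q + 1) (hq : q ≠ 0)
    {x y : Fin r × Fin s} (hy : y ≠ x) : 2 ≤ (cls (torus r s) {x} y).ncard := by
  have hyx : y - x ≠ 0 := sub_ne_zero.mpr hy
  obtain ⟨z₁, z₂, hne, h₁, h₂⟩ := exists_ne_torusNorm_eq hs hq hyx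
  have hmem (z : Fin r × Fin s) (hnorm : torusNorm z = torusNorm (y - x)) :
      x + z ∈ cls (torus r s) {x} y := by
    rw [cls_torus_singleton]
    refine ⟨fun h => ?_, by rwa [add_sub_cancel_left]⟩
    rw [add_eq_left.mp h] at hnorm
    exact hyx (torusNorm_eq_zero.mp (by rw [← hnorm, torusNorm_eq_zero]))
  exact (Set.one_lt_ncard (Set.toFinite _)).mpr
    ⟨_, hmem z₁ h₁, _, hmem z₂ h₂, fun h => hne (add_left_cancel h)⟩

lemma ncard_cls_torus_le_two_of_column {S : Set (Fin r × Fin s)} {c : Fin r}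
    (hS : ∀ d, (c, d) ∈ S) (y : Fin r × Fin s) : (cls (torus r s) S y).ncard ≤ 2 := by
  refine Set.ncard_le_two_of_subset_pair (a := y) (b := (c - (y.1 - c), y.2)) ?_
  rintro w ⟨-, hw⟩
  have h₁ := hw (c, w.2) (hS _)
  have h₂ := hw (c, y.2) (hS _)
  simp only [torus_dist, torusNorm, Prod.fst_sub, Prod.snd_sub, sub_self, cycleNorm_zero]
    at h₁ h₂
  rw [← neg_sub w.2, cycleNorm_neg] at h₁
  have e₂ : w.2 = y.2 := sub_eq_zero.mp (cycleNorm_eq_zero.mp (by omega))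
  rcases eq_or_eq_neg_of_cycleNorm_eq (a := w.1 - c) (b := y.1 - c) (by omega) with e₁ | e₁
  · exact Or.inl (Prod.ext (sub_left_inj.mp e₁) e₂)
  · refine Or.inr (Prod.ext ?_ e₂)
    change w.1 = c - (y.1 - c)
    rw [sub_eq_add_neg c, ← e₁, add_sub_cancel]

section EvenOdd

variable {m q : ℕ}

lemma natCast_add_self_eq_zero (hr : r = 2 * m) : (m : Fin r) + m = 0 := by
  rw [← Nat.cast_add, ← two_mul, ← hr, Fin.natCast_self]

lemma natCast_add_self_eq_neg_one (hs : s = 2 * q + 1) : (q : Fin s) + q = -1 :=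
  eq_neg_of_add_eq_zero_left (by rw [← Nat.cast_add, ← Nat.cast_add_one, ← two_mul, ← hs,
    Fin.natCast_self])

lemma torusNorm_eq_iff (hr : r = 2 * m) (hs : s = 2 * q + 1) (z : Fin r × Fin s) :
    torusNorm z = m + q ↔ z = ((m : Fin r), (q : Fin s)) ∨ z = ((m : Fin r), -(q : Fin s)) := by
  have hm : cycleNorm (m : Fin r) = m := cycleNorm_natCast (by omega)
  have hq : cycleNorm (q : Fin s) = q := cycleNorm_natCast (by omega)
  constructor
  · intro h
    have := cycleNorm_le_half z.1
    have := cycleNorm_le_half z.2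
    unfold torusNorm at h
    have e₁ : z.1 = m := by
      rcases eq_or_eq_neg_of_cycleNorm_eq (a := z.1) (b := m) (by omega) with e | e
      · exact e
      · rw [e, neg_eq_of_add_eq_zero_left (natCast_add_self_eq_zero hr)]
    rcases eq_or_eq_neg_of_cycleNorm_eq (a := z.2) (b := q) (by omega) with e₂ | e₂
    · exact Or.inl (Prod.ext e₁ e₂)
    · exact Or.inr (Prod.ext e₁ e₂)
  · rintro (rfl | rfl) <;> simp [torusNorm, cycleNorm_neg, hm, hq]

lemma cls_torus_subset_antipodes (hr : r = 2 * m) (hs : s = 2 * q + 1)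
    {S : Set (Fin r × Fin s)} {u y : Fin r × Fin s} (hu : u ∈ S)
    (hy : torusNorm (y - u) = m + q) :
    cls (torus r s) S y ⊆ {u + ((m : Fin r), (q : Fin s)), u + ((m : Fin r), -(q : Fin s))} := by
  rintro w ⟨-, hw⟩
  have h := hw u hu
  rw [torus_dist, torus_dist, hy, eq_comm, torusNorm_eq_iff hr hs] at h
  rcases h with h | h
  · exact Or.inl (eq_add_of_sub_eq' h)
  · exact Or.inr (eq_add_of_sub_eq' h)

lemma mem_of_forall_add_antipode_mem (hr : r = 2 * m) (hs : s = 2 * q + 1)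
    {S : Set (Fin r × Fin s)} (hS : ∀ p ∈ S, p + ((m : Fin r), (q : Fin s)) ∈ S)
    {u : Fin r × Fin s} (hu : u ∈ S) (d : Fin s) : (u.1, d) ∈ S := by
  have hstep (p) (hp : p ∈ S) : p + (0, -1) ∈ S := by
    have h2a : ((m : Fin r), (q : Fin s)) + ((m : Fin r), (q : Fin s)) = (0, -1) :=
      Prod.ext (natCast_add_self_eq_zero hr) (natCast_add_self_eq_neg_one hs)
    simpa only [add_assoc, h2a] using hS _ (hS p hp)
  have hcol (k : ℕ) : (u.1, u.2 - k) ∈ S := by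
    induction k with
    | zero => simpa using hu
    | succ k ih =>
      convert hstep _ ih using 1
      refine Prod.ext (add_zero _).symm ?_
      rw [Prod.snd_add, Nat.cast_succ, sub_add_eq_sub_sub, sub_eq_add_neg _ 1]
  simpa using hcol (u.2 - d).val

lemma exists_ncard_cls_torus_le_two (hr : r = 2 * m) (hs : s = 2 * q + 1)
    {S : Set (Fin r × Fin s)} (hne : S.Nonempty) (hcne : Sᶜ.Nonempty) :
    ∃ y ∉ S, (cls (torus r s) S y).ncard ≤ 2 := by
  by_cases hS : ∀ p ∈ S, p + ((m : Fin r), (q : Fin s)) ∈ S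
  · obtain ⟨u, hu⟩ := hne
    obtain ⟨y, hy⟩ := hcne
    exact ⟨y, hy,
      ncard_cls_torus_le_two_of_column (mem_of_forall_add_antipode_mem hr hs hS hu) y⟩
  · obtain ⟨u, hu, hua⟩ := not_forall₂.mp hS
    refine ⟨_, hua, Set.ncard_le_two_of_subset_pair (cls_torus_subset_antipodes hr hs hu ?_)⟩
    rw [add_sub_cancel_left, torusNorm_eq_iff hr hs]
    exact Or.inl rfl

lemma isKARS_torus_singleton (hr : r = 2 * m) (hs : s = 2 * q + 1) (hq : q ≠ 0)
    (x : Fin r × Fin s) : IsKARS (torus r s) 2 {x} := by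
  set a : Fin r × Fin s := ((m : Fin r), (q : Fin s))
  have ha : torusNorm a = m + q := (torusNorm_eq_iff hr hs a).mpr (Or.inl rfl)
  have hxa : x + a ≠ x := by
    rw [Ne, add_eq_left, ← torusNorm_eq_zero, ha]
    omega
  refine ⟨Set.singleton_nonempty x, ⟨x + a, hxa⟩,
    fun y hy => two_le_ncard_cls_torus_singleton hs hq hy,
    x + a, hxa, le_antisymm ?_ (two_le_ncard_cls_torus_singleton hs hq hxa)⟩
  refine Set.ncard_le_two_of_subset_pair (cls_torus_subset_antipodes hr hs rfl ?_)
  rwa [add_sub_cancel_left]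

lemma le_two_of_isKARS_torus (hr : r = 2 * m) (hs : s = 2 * q + 1) {k : ℕ}
    {S : Set (Fin r × Fin s)} (h : IsKARS (torus r s) k S) : k ≤ 2 := by
  obtain ⟨y, hy, hle⟩ := exists_ncard_cls_torus_le_two hr hs h.1 h.2.1
  exact (h.2.2.1 y hy).trans hle

end EvenOdd

end Torus

/-- For `r, s ≥ 3` of distinct parity, every single vertex of `C_r □ C_s` is a 2-ARS,
hence `adim_2(C_r □ C_s) = 1`, and `C_r □ C_s` is 2-metric antidimensional. -/
theorem stmt8 (r s : ℕ) (hr : 3 ≤ r) (hs : 3 ≤ s) (hpar : ¬(Even r ↔ Even s)) :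
    (∀ x : Fin r × Fin s, IsKARS ((cycleGraph r).boxProd (cycleGraph s)) 2 {x}) ∧
    adim ((cycleGraph r).boxProd (cycleGraph s)) 2 = 1 ∧
    (∃ S : Set (Fin r × Fin s), IsKARS ((cycleGraph r).boxProd (cycleGraph s)) 2 S) ∧
    ∀ k, 2 < k → ¬∃ S : Set (Fin r × Fin s),
      IsKARS ((cycleGraph r).boxProd (cycleGraph s)) k S := by
  have : NeZero r := ⟨by omega⟩
  have : NeZero s := ⟨by omega⟩
  have key : (∀ x, IsKARS (torus r s) 2 {x}) ∧ ∀ k S, IsKARS (torus r s) k S → k ≤ 2 := by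
    have hcases : Even r ∧ Odd s ∨ Odd r ∧ Even s := by
      simp only [← Nat.not_even_iff_odd]; tauto
    rcases hcases with ⟨⟨m, hm⟩, ⟨q, hq⟩⟩ | ⟨⟨q, hq⟩, ⟨m, hm⟩⟩
    · have hm : r = 2 * m := by omega
      exact ⟨isKARS_torus_singleton hm hq (by omega), fun k S => le_two_of_isKARS_torus hm hq⟩
    · have hm : s = 2 * m := by omega
      let e := boxProdComm (cycleGraph s) (cycleGraph r)
      refine ⟨fun x => ?_, fun k S hS => le_two_of_isKARS_torus hm hq (hS.image_iso e.symm)⟩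
      simpa using (isKARS_torus_singleton hm hq (by omega) (e.symm x)).image_iso e
  obtain ⟨hsingle, hle⟩ := key
  exact ⟨hsingle, adim_eq_one_of_forall_isKARS_singleton hsingle, ⟨_, hsingle (0, 0)⟩,
    fun k hk ⟨S, hS⟩ => (hle k S hS).not_gt hk⟩
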